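/- There exist deductive arguments I and J such that I is a defeater of J but Claim(I) ⊢ Claim(J); hence the class of defeaters does not validate constraint NEG1. -/
import Mathlib


inductive PropForm (α : Type) : Type
  | atom : α → PropForm α
  | fals : PropForm α
  | imp : PropForm α → PropForm α → PropForm α

namespace PropForm

def eval {α : Type} (v : α → Prop) : PropForm α → Prop
  | atom a => v a
  | fals => False
  | imp p q => eval v p → eval v q

end PropForm

/-- `v` satisfies every formula in `S`. -/
def Models {α : Type} (v : α → Prop) (S : Set (PropForm α)) : Prop :=
  ∀ φ ∈ S, φ.eval v

/-- Classical (semantic) consequence: `S ⊢ ψ`. -/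
def Entails {α : Type} (S : Set (PropForm α)) (ψ : PropForm α) : Prop :=
  ∀ v : α → Prop, Models v S → ψ.eval v

/-- `S ⊬ ⊥`. -/
def Consistent {α : Type} (S : Set (PropForm α)) : Prop :=
  ∃ v : α → Prop, Models v S

/-- A deductive argument `⟨Φ,α⟩`: `Φ` consistent, `Φ ⊢ α`, `Φ` minimal. -/
structure Argument (α : Type) where
  support : Finset (PropForm α)
  claim : PropForm α
  con : Consistent (support : Set (PropForm α))
  ent : Entails (support : Set (PropForm α)) claim
  min : ∀ Ψ : Finset (PropForm α), Ψ ⊂ support → ¬ Entails (Ψ : Set (PropForm α)) claim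

/-- `Claim(I) ⊢ ¬⋀Support(J)`. -/
def Defeater {α : Type} (I J : Argument α) : Prop :=
  ∀ v : α → Prop, I.claim.eval v → ¬ Models v (J.support : Set (PropForm α))

/-- `Claim(I) ≡ ¬⋀Ψ` for some `Ψ ⊆ Support(J)`. -/
def Undercut {α : Type} (I J : Argument α) : Prop :=
  ∃ Ψ : Finset (PropForm α), Ψ ⊆ J.support ∧
    ∀ v : α → Prop, I.claim.eval v ↔ ¬ Models v (Ψ : Set (PropForm α))

/-- `Claim(I) ≡ ¬φ` for some `φ ∈ Support(J)`. -/
def DirectUndercut {α : Type} (I J : Argument α) : Prop :=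
  ∃ φ ∈ J.support, ∀ v : α → Prop, I.claim.eval v ↔ ¬ φ.eval v

/-- `Claim(I) ≡ ¬⋀Support(J)`. -/
def CanonicalUndercut {α : Type} (I J : Argument α) : Prop :=
  ∀ v : α → Prop, I.claim.eval v ↔ ¬ Models v (J.support : Set (PropForm α))

/-- `Claim(I) ⊢ ¬Claim(J)`. -/
def DefeatingRebuttal {α : Type} (I J : Argument α) : Prop :=
  ∀ v : α → Prop, I.claim.eval v → ¬ J.claim.eval v

inductive Lbl | pos | neg | amb
deriving DecidableEq

/-- An instantiated bipolar argument graph. -/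
structure IBAG (ν α : Type) where
  arc : ν → ν → Prop
  lbl : ν → ν → Lbl
  inst : ν → Argument α

namespace IBAG

variable {ν α : Type}

def NEG1 (G : IBAG ν α) : Prop :=
  ∀ A B, G.arc A B → G.lbl A B = Lbl.neg →
    ¬ Entails {(G.inst A).claim} (G.inst B).claim

def NEG2 (G : IBAG ν α) : Prop :=
  ∀ A B, G.arc A B → G.lbl A B = Lbl.neg →
    ∀ φ ∈ (G.inst B).support, ¬ Entails {(G.inst A).claim} φ

def NEG3 (G : IBAG ν α) : Prop :=
  ∀ A B, G.arc A B → G.lbl A B = Lbl.neg →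
    ¬ Consistent ({(G.inst A).claim} ∪ ((G.inst B).support : Set (PropForm α)))

def NEG4 (G : IBAG ν α) : Prop :=
  ∀ A B C, G.arc A B → G.lbl A B = Lbl.neg →
    Entails {(G.inst C).claim} (G.inst A).claim →
    G.arc C B ∧ G.lbl C B = Lbl.neg

def NEG5 (G : IBAG ν α) : Prop :=
  ∀ A B C, G.arc A B → G.lbl A B = Lbl.neg →
    (G.inst B).support ⊆ (G.inst C).support →
    G.arc A C ∧ G.lbl A C = Lbl.neg

def NEG6 (G : IBAG ν α) : Prop :=
  ∀ A B C, G.arc A B → G.lbl A B = Lbl.neg →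
    Entails {(G.inst C).claim} (G.inst A).claim →
    G.arc C B → G.lbl C B ≠ Lbl.pos

def NEG7 (G : IBAG ν α) : Prop :=
  ∀ A B C, G.arc A B → G.lbl A B = Lbl.neg →
    (G.inst B).support ⊆ (G.inst C).support →
    G.arc A C → G.lbl A C ≠ Lbl.pos

def POS1 (G : IBAG ν α) : Prop :=
  ∀ A B, G.arc A B → G.lbl A B = Lbl.pos →
    Consistent (((G.inst A).support : Set (PropForm α)) ∪ ((G.inst B).support : Set (PropForm α)))

def POS2 (G : IBAG ν α) : Prop :=
  ∀ A B, G.arc A B → G.lbl A B = Lbl.pos →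
    Consistent ({(G.inst A).claim} ∪ ((G.inst B).support : Set (PropForm α)))

def POS3 (G : IBAG ν α) : Prop :=
  ∀ A B, G.arc A B → G.lbl A B = Lbl.pos →
    ∃ φ ∈ (G.inst B).support, (G.inst A).claim = φ

def POS4 (G : IBAG ν α) : Prop :=
  ∀ A B, G.arc A B → G.lbl A B = Lbl.pos →
    ∃ Γ : Finset (PropForm α), Γ ⊆ (G.inst B).support ∧
      ∀ v : α → Prop, (G.inst A).claim.eval v → Models v (Γ : Set (PropForm α))

def POS5 (G : IBAG ν α) : Prop :=
  ∀ A B, G.arc A B → G.lbl A B = Lbl.pos →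
    (∀ v : α → Prop, (G.inst A).claim.eval v → Models v ((G.inst B).support : Set (PropForm α))) ∧
      (G.inst B).support ≠ ∅

def POS6 (G : IBAG ν α) : Prop :=
  ∀ A B C, G.arc A B → G.lbl A B = Lbl.pos →
    Entails {(G.inst C).claim} (G.inst A).claim →
    G.arc C B ∧ G.lbl C B = Lbl.pos

def POS7 (G : IBAG ν α) : Prop :=
  ∀ A B C, G.arc A B → G.lbl A B = Lbl.pos →
    (G.inst B).support ⊆ (G.inst C).support →
    G.arc A C ∧ G.lbl A C = Lbl.pos

def POS8 (G : IBAG ν α) : Prop :=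
  ∀ A B C, G.arc A B → G.lbl A B = Lbl.pos →
    G.arc C B → Entails {(G.inst C).claim} (G.inst A).claim →
    G.lbl C B ≠ Lbl.neg

def POS9 (G : IBAG ν α) : Prop :=
  ∀ A B C, G.arc A B → G.lbl A B = Lbl.pos →
    G.arc A C → (G.inst B).support ⊆ (G.inst C).support →
    G.lbl A C ≠ Lbl.neg

def INC1 (G : IBAG ν α) : Prop :=
  ∀ A B, ¬ Consistent ({(G.inst A).claim} ∪ ((G.inst B).support : Set (PropForm α))) →
    G.arc A B ∧ G.lbl A B = Lbl.neg

def INC2 (G : IBAG ν α) : Prop :=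
  ∀ A B, ¬ Consistent ({(G.inst A).claim} ∪ ((G.inst B).support : Set (PropForm α))) →
    G.arc A B ∧ G.lbl A B ≠ Lbl.pos

def INC3 (G : IBAG ν α) : Prop :=
  ∀ A B, ¬ Consistent ({(G.inst A).claim} ∪ ((G.inst B).support : Set (PropForm α))) →
    G.arc A B → G.lbl A B ≠ Lbl.pos

def SUP1 (G : IBAG ν α) : Prop :=
  ∀ A B, (∃ φ ∈ (G.inst B).support, (G.inst A).claim = φ) →
    G.arc A B ∧ G.lbl A B = Lbl.pos

def SUP2 (G : IBAG ν α) : Prop :=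
  ∀ A B, (∃ Γ : Finset (PropForm α), Γ.Nonempty ∧ Γ ⊆ (G.inst B).support ∧
      ∀ v : α → Prop, (G.inst A).claim.eval v → Models v (Γ : Set (PropForm α))) →
    G.arc A B ∧ G.lbl A B = Lbl.pos

def SUP3 (G : IBAG ν α) : Prop :=
  ∀ A B, (∃ φ ∈ (G.inst B).support, (G.inst A).claim = φ) →
    G.arc A B ∧ G.lbl A B ≠ Lbl.neg

def SUP4 (G : IBAG ν α) : Prop :=
  ∀ A B, (∃ Γ : Finset (PropForm α), Γ.Nonempty ∧ Γ ⊆ (G.inst B).support ∧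
      ∀ v : α → Prop, (G.inst A).claim.eval v → Models v (Γ : Set (PropForm α))) →
    G.arc A B ∧ G.lbl A B ≠ Lbl.neg

def SUP5 (G : IBAG ν α) : Prop :=
  ∀ A B, (∃ φ ∈ (G.inst B).support, Entails {(G.inst A).claim} φ) →
    G.arc A B → G.lbl A B ≠ Lbl.neg

def SUP6 (G : IBAG ν α) : Prop :=
  ∀ A B, (∃ Γ : Finset (PropForm α), Γ.Nonempty ∧ Γ ⊆ (G.inst B).support ∧
      ∀ v : α → Prop, (G.inst A).claim.eval v → Models v (Γ : Set (PropForm α))) →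
    G.arc A B → G.lbl A B ≠ Lbl.neg

/-- `Args(Δ)`: all deductive arguments whose support comes from `Δ`. -/
def ArgsOf {α : Type} (Δ : Finset (PropForm α)) : Set (Argument α) :=
  {I : Argument α | I.support ⊆ Δ}

/-- The set of instantiated arguments of the graph. -/
def Codomain (G : IBAG ν α) : Set (Argument α) := Set.range G.inst

def Uses (G : IBAG ν α) (Δ : Finset (PropForm α)) : Prop :=
  G.Codomain ⊆ ArgsOf Δ

def Exhausts (G : IBAG ν α) (Δ : Finset (PropForm α)) : Prop :=
  G.Codomain = ArgsOf Δ

/-- All formulae occurring in the supports of instantiated arguments. -/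
def Inform (G : IBAG ν α) : Set (PropForm α) :=
  {φ | ∃ I ∈ G.Codomain, φ ∈ I.support}

def Displays (G : IBAG ν α) (Δ : Finset (PropForm α)) : Prop :=
  (↑Δ : Set (PropForm α)) = G.Inform

end IBAG



section Witness

deriving instance DecidableEq for PropForm

open PropForm

private def fA : PropForm (Fin 2) := .atom 0
private def fB : PropForm (Fin 2) := .atom 1
/-- `a ∧ b` encoded as `¬(a → ¬b)`. -/
private def fAB : PropForm (Fin 2) := .imp (.imp fA (.imp fB .fals)) .fals
private def fNA : PropForm (Fin 2) := .imp fA .fals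
private def fNAB : PropForm (Fin 2) := .imp fNA fB

private def argI : Argument (Fin 2) where
  support := {fAB}
  claim := fAB
  con := by
    refine ⟨fun _ => True, ?_⟩
    intro φ hφ
    simp only [Finset.coe_singleton, Set.mem_singleton_iff] at hφ
    subst hφ
    simp [fAB, fA, fB, PropForm.eval]
  ent := by
    intro v hv
    exact hv fAB (by simp)
  min := by
    intro Ψ hΨ hE
    have hempty : Ψ = ∅ := (Finset.eq_empty_of_ssubset_singleton hΨ)
    subst hempty
    have := hE (fun _ => False) (by intro φ hφ; simp at hφ)
    simp [fAB, fA, fB, PropForm.eval] at this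

private def argJ : Argument (Fin 2) where
  support := {fNA, fNAB}
  claim := fB
  con := by
    refine ⟨fun i => i = 1, ?_⟩
    intro φ hφ
    simp only [Finset.coe_insert, Finset.coe_singleton, Set.mem_insert_iff,
      Set.mem_singleton_iff] at hφ
    rcases hφ with h | h <;> subst h <;>
      simp [fNA, fNAB, fA, fB, PropForm.eval]
  ent := by
    intro v hv
    have h1 := hv fNA (by simp)
    have h2 := hv fNAB (by simp)
    simp only [fNA, fNAB, fA, fB, PropForm.eval] at *
    exact h2 h1
  min := by
    intro Ψ hΨ hE
    have hsub : Ψ ⊆ {fNA, fNAB} := hΨ.subset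
    by_cases hna : fNA ∈ Ψ
    · -- then fNAB ∉ Ψ
      have hnab : fNAB ∉ Ψ := by
        intro hmem
        apply hΨ.not_subset
        intro φ hφ
        simp only [Finset.mem_insert, Finset.mem_singleton] at hφ
        rcases hφ with h | h <;> subst h <;> assumption
      have := hE (fun _ => False) ?_
      · simpa [fB, PropForm.eval] using this
      · intro φ hφ
        have hφ' := hsub hφ
        simp only [Finset.mem_insert, Finset.mem_singleton] at hφ'
        rcases hφ' with h | h
        · subst h; simp [fNA, fA, PropForm.eval]
        · subst h; exact absurd hφ hnab
    · -- fNA ∉ Ψ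
      have := hE (fun i => i = 0) ?_
      · simpa [fB, PropForm.eval] using this
      · intro φ hφ
        have hφ' := hsub hφ
        simp only [Finset.mem_insert, Finset.mem_singleton] at hφ'
        rcases hφ' with h | h
        · subst h; exact absurd hφ hna
        · subst h
          simp [fNAB, fNA, fA, fB, PropForm.eval]

end Witness

theorem defeater_not_NEG1 :
    ∃ I J : Argument (Fin 2), Defeater I J ∧ Entails {I.claim} J.claim := by
  refine ⟨argI, argJ, ?_, ?_⟩
  · intro v hI hM
    have hna := hM fNA (by simp [argJ])
    simp only [argI, argJ, fAB, fNA, fA, fB, PropForm.eval] at *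
    exact hI (fun h0 _ => hna h0)
  · intro v hv
    have hI := hv argI.claim (by simp)
    simp only [argI, argJ, fAB, fA, fB, PropForm.eval] at *
    by_contra hb
    exact hI (fun _ h1 => hb h1)
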